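/- arXiv:1811.12252 — 4 statements merged into one kernel-verified Lean document; each statement's English description precedes it below -/
import Mathlib

section
/- For all graphs G and H, G is isomorphic to H if and only if q(G) is isomorphic to q(H), where for a graph G the graph q(G) is defined as follows: its vertex set is V(G) together with the set B(G) of all ordered pairs (v,w) with vw an edge of G; any two distinct vertices of V(G) are adjacent in q(G); for each edge vw of G, the pairs of vertices {v,(v,w)}, {(v,w),(w,v)} and {(w,v),w} are adjacent in q(G); and q(G) has no other edges. -/
open SimpleGraph

/-- The graph `2P_1 + P_3` on five vertices: vertices `0` and `1` are isolated and
`2 - 3 - 4` is a path on three vertices. -/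
def twoP1PlusP3 : SimpleGraph (Fin 5) :=
  SimpleGraph.fromRel (fun a b => (a = 2 ∧ b = 3) ∨ (a = 3 ∧ b = 4))

/-- The complement of `2P_1 + P_3`, i.e. `K_5` minus the two edges of a `P_3`. -/
def co2P1P3 : SimpleGraph (Fin 5) := twoP1PlusP3ᶜ

/-- The graph `P_1 + P_3`: an isolated vertex together with a path on three vertices. -/
def P1PlusP3 : SimpleGraph (Fin 4) :=
  SimpleGraph.fromRel (fun a b => (a = 1 ∧ b = 2) ∨ (a = 2 ∧ b = 3))

/-- The paw: the complement of `P_1 + P_3` (a triangle with a pendant vertex). -/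
def paw : SimpleGraph (Fin 4) := P1PlusP3ᶜ

/-- The graph `P_2 + P_3`: disjoint union of a path on two vertices and a path on
three vertices. -/
def P2PlusP3 : SimpleGraph (Fin 5) :=
  SimpleGraph.fromRel (fun a b => (a = 0 ∧ b = 1) ∨ (a = 2 ∧ b = 3) ∨ (a = 3 ∧ b = 4))

/-- The graph `2P_1 + P_2`. -/
def twoP1PlusP2 : SimpleGraph (Fin 4) :=
  SimpleGraph.fromRel (fun a b => a = 2 ∧ b = 3)

/-- The diamond: the complement of `2P_1 + P_2`, i.e. `K_4` minus an edge. -/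
def diamond : SimpleGraph (Fin 4) := twoP1PlusP2ᶜ

/-- The graph `2P_3`: disjoint union of two paths on three vertices. -/
def twoP3 : SimpleGraph (Fin 6) :=
  SimpleGraph.fromRel
    (fun a b => (a = 0 ∧ b = 1) ∨ (a = 1 ∧ b = 2) ∨ (a = 3 ∧ b = 4) ∨ (a = 4 ∧ b = 5))

/-- The graph `P_1 + P_4`. -/
def P1PlusP4 : SimpleGraph (Fin 5) :=
  SimpleGraph.fromRel (fun a b => (a = 1 ∧ b = 2) ∨ (a = 2 ∧ b = 3) ∨ (a = 3 ∧ b = 4))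

/-- The gem: the complement of `P_1 + P_4`. -/
def gem : SimpleGraph (Fin 5) := P1PlusP4ᶜ

/-- The graph `P_1 + 2P_2`. -/
def P1Plus2P2 : SimpleGraph (Fin 5) :=
  SimpleGraph.fromRel (fun a b => (a = 1 ∧ b = 2) ∨ (a = 3 ∧ b = 4))

/-- `G` is `H`-free: no induced subgraph of `G` is isomorphic to `H`; equivalently,
there is no graph embedding (induced-subgraph embedding) of `H` into `G`. -/
def Free {W V : Type*} (H : SimpleGraph W) (G : SimpleGraph V) : Prop :=
  IsEmpty (H ↪g G)

/-- A graph is complete multipartite if its vertex set can be partitioned into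
independent sets (the equivalence classes of some equivalence relation) such that
two vertices are adjacent if and only if they lie in different parts. -/
def IsCompleteMultipartite {V : Type*} (G : SimpleGraph V) : Prop :=
  ∃ s : Setoid V, ∀ v w : V, G.Adj v w ↔ ¬ s.r v w

/-- The graph `q(G)`: its vertices are the vertices of `G` together with all ordered
pairs `(v, w)` with `vw` an edge of `G`; the vertices of `G` are pairwise adjacent;
for each edge `vw` of `G` the vertex `v` is adjacent to `(v, w)`, the vertex `(v, w)`
is adjacent to `(w, v)`, and `(w, v)` is adjacent to `w`; there are no other edges. -/
def qGraph {V : Type*} (G : SimpleGraph V) :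
    SimpleGraph (V ⊕ {p : V × V // G.Adj p.1 p.2}) :=
  SimpleGraph.fromRel (fun a b =>
    match a, b with
    | Sum.inl _, Sum.inl _ => True
    | Sum.inl v, Sum.inr e => v = e.1.1
    | Sum.inr _, Sum.inl _ => False
    | Sum.inr e, Sum.inr f => e.1.1 = f.1.2 ∧ e.1.2 = f.1.1)

namespace Q16

variable {V : Type*} {G : SimpleGraph V}

lemma q_inl_inl {v w : V} : (qGraph G).Adj (Sum.inl v) (Sum.inl w) ↔ v ≠ w := by
  simp [qGraph, fromRel_adj]

lemma q_inl_inr {v : V} {e : {p : V × V // G.Adj p.1 p.2}} :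
    (qGraph G).Adj (Sum.inl v) (Sum.inr e) ↔ v = e.1.1 := by
  simp [qGraph, fromRel_adj]

lemma q_inr_inl {v : V} {e : {p : V × V // G.Adj p.1 p.2}} :
    (qGraph G).Adj (Sum.inr e) (Sum.inl v) ↔ v = e.1.1 := by
  simp [qGraph, fromRel_adj]

lemma q_inr_inr {e f : {p : V × V // G.Adj p.1 p.2}} :
    (qGraph G).Adj (Sum.inr e) (Sum.inr f) ↔ e.1.1 = f.1.2 ∧ e.1.2 = f.1.1 := by
  simp only [qGraph, fromRel_adj]
  constructor
  · rintro ⟨hne, h | h⟩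
    · exact h
    · exact ⟨h.2.symm, h.1.symm⟩
  · rintro ⟨h1, h2⟩
    refine ⟨?_, Or.inl ⟨h1, h2⟩⟩
    intro h
    obtain rfl := Sum.inr_injective h
    exact G.ne_of_adj e.2 h1

lemma q_no_triangle {e : {p : V × V // G.Adj p.1 p.2}} {a b : V ⊕ {p : V × V // G.Adj p.1 p.2}}
    (h1 : (qGraph G).Adj (Sum.inr e) a) (h2 : (qGraph G).Adj (Sum.inr e) b)
    (h3 : (qGraph G).Adj a b) : False := by
  have key : ∀ x, (qGraph G).Adj (Sum.inr e) x →
      x = Sum.inl e.1.1 ∨ x = Sum.inr ⟨(e.1.2, e.1.1), e.2.symm⟩ := by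
    rintro (v | f) h
    · left
      rw [(qGraph G).adj_comm, q_inl_inr] at h
      exact congrArg Sum.inl h
    · right
      rw [q_inr_inr] at h
      exact congrArg Sum.inr (Subtype.ext (Prod.ext h.2.symm h.1.symm))
  rcases key a h1 with rfl | rfl <;> rcases key b h2 with rfl | rfl
  · exact (qGraph G).irrefl h3
  · rw [q_inl_inr] at h3
    exact G.ne_of_adj e.2 h3
  · rw [q_inr_inl] at h3
    exact G.ne_of_adj e.2 h3
  · exact (qGraph G).irrefl h3

lemma adj_iff_path {v w : V} :
    G.Adj v w ↔ ∃ a b : V ⊕ {p : V × V // G.Adj p.1 p.2},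
      a.isRight ∧ b.isRight ∧ (qGraph G).Adj (Sum.inl v) a ∧
      (qGraph G).Adj a b ∧ (qGraph G).Adj b (Sum.inl w) := by
  constructor
  · intro h
    refine ⟨Sum.inr ⟨(v, w), h⟩, Sum.inr ⟨(w, v), h.symm⟩, rfl, rfl, ?_, ?_, ?_⟩
    · rw [q_inl_inr]
    · rw [q_inr_inr]; exact ⟨rfl, rfl⟩
    · rw [q_inr_inl]
  · rintro ⟨(x | e), b, ha, hb, h1, h2, h3⟩
    · simp at ha
    rcases b with y | f
    · simp at hb
    rw [q_inl_inr] at h1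
    rw [q_inr_inr] at h2
    rw [q_inr_inl] at h3
    rw [h1, h2.1, h3]
    exact f.2.symm

def qIsoOfIso {W : Type*} {H : SimpleGraph W} (e : G ≃g H) : qGraph G ≃g qGraph H where
  toEquiv := Equiv.sumCongr e.toEquiv
    ((Equiv.prodCongr e.toEquiv e.toEquiv).subtypeEquiv (fun p => (e.map_adj_iff).symm))
  map_rel_iff' := by
    rintro (v | p) (w | q)
    · simp [q_inl_inl, e.toEquiv.injective.ne_iff]
    · simp only [Equiv.sumCongr_apply, Sum.map_inl, Sum.map_inr, q_inl_inr,
        Equiv.subtypeEquiv_apply, Equiv.prodCongr_apply, Prod.map_fst]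
      exact e.toEquiv.injective.eq_iff
    · simp only [Equiv.sumCongr_apply, Sum.map_inl, Sum.map_inr, q_inr_inl,
        Equiv.subtypeEquiv_apply, Equiv.prodCongr_apply, Prod.map_fst]
      exact e.toEquiv.injective.eq_iff
    · simp only [Equiv.sumCongr_apply, Sum.map_inr, q_inr_inr,
        Equiv.subtypeEquiv_apply, Equiv.prodCongr_apply, Prod.map_fst, Prod.map_snd]
      exact and_congr (e.toEquiv.injective.eq_iff (a := p.1.1) (b := q.1.2))
        (e.toEquiv.injective.eq_iff (a := p.1.2) (b := q.1.1))

example (α : Type*) [Fintype α] (h : 2 < Fintype.card α) : ∃ a b c : α, a ≠ b ∧ a ≠ c ∧ b ≠ c :=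
  Fintype.two_lt_card_iff.mp h

lemma exists_two_ne [Fintype V] (hV : 3 ≤ Fintype.card V) (v : V) :
    ∃ a b : V, a ≠ b ∧ a ≠ v ∧ b ≠ v := by
  obtain ⟨a, b, c, hab, hac, hbc⟩ := Fintype.two_lt_card_iff.mp hV
  rcases eq_or_ne v a with rfl | h1
  · exact ⟨b, c, hbc, hab.symm, hac.symm⟩
  rcases eq_or_ne v b with rfl | h2
  · exact ⟨a, c, hac, hab, hbc.symm⟩
  · exact ⟨a, b, hab, h1.symm, h2.symm⟩

lemma inl_to_inl {W : Type*} [Fintype V] {H : SimpleGraph W} (hV : 3 ≤ Fintype.card V)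
    (φ : qGraph G ≃g qGraph H) (v : V) : ∃ w : W, φ (Sum.inl v) = Sum.inl w := by
  rcases h : φ (Sum.inl v) with w | e
  · exact ⟨w, rfl⟩
  · exfalso
    obtain ⟨a, b, hab, hav, hbv⟩ := exists_two_ne hV v
    have h1 : (qGraph H).Adj (Sum.inr e) (φ (Sum.inl a)) := by
      rw [← h]; exact φ.map_adj_iff.mpr (q_inl_inl.mpr (Ne.symm hav))
    have h2 : (qGraph H).Adj (Sum.inr e) (φ (Sum.inl b)) := by
      rw [← h]; exact φ.map_adj_iff.mpr (q_inl_inl.mpr (Ne.symm hbv))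
    have h3 : (qGraph H).Adj (φ (Sum.inl a)) (φ (Sum.inl b)) :=
      φ.map_adj_iff.mpr (q_inl_inl.mpr hab)
    exact q_no_triangle h1 h2 h3

lemma adj_map {W : Type*} {H : SimpleGraph W} (φ : qGraph G ≃g qGraph H) (f : V → W)
    (hf : ∀ v, φ (Sum.inl v) = Sum.inl (f v))
    (hinr : ∀ e, (φ (Sum.inr e)).isRight) {v w : V} (h : G.Adj v w) :
    H.Adj (f v) (f w) := by
  obtain ⟨a, b, ha, hb, h1, h2, h3⟩ := adj_iff_path.mp h
  refine adj_iff_path.mpr ⟨φ a, φ b, ?_, ?_, ?_, ?_, ?_⟩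
  · rcases a with x | e
    · simp at ha
    · exact hinr e
  · rcases b with x | e
    · simp at hb
    · exact hinr e
  · rw [← hf v]; exact φ.map_adj_iff.mpr h1
  · exact φ.map_adj_iff.mpr h2
  · rw [← hf w]; exact φ.map_adj_iff.mpr h3

lemma backward_big {W : Type*} [Fintype V] [Fintype W] {H : SimpleGraph W}
    (hV : 3 ≤ Fintype.card V) (φ : qGraph G ≃g qGraph H) : Nonempty (G ≃g H) := by
  choose f hf using inl_to_inl hV φ
  have hfinj : Function.Injective f := by
    intro a b hab
    have : φ (Sum.inl a) = φ (Sum.inl b) := by rw [hf a, hf b, hab]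
    exact Sum.inl_injective (φ.toEquiv.injective this)
  have hW : 3 ≤ Fintype.card W := hV.trans (Fintype.card_le_of_injective f hfinj)
  choose g hg using inl_to_inl hW φ.symm
  have hgf : ∀ v, g (f v) = v := by
    intro v
    have h1 : φ.symm (Sum.inl (f v)) = Sum.inl v := by
      rw [← hf v]; exact φ.toEquiv.symm_apply_apply _
    exact Sum.inl_injective ((hg (f v)).symm.trans h1)
  have hfg : ∀ w, f (g w) = w := by
    intro w
    have h1 : φ (Sum.inl (g w)) = Sum.inl w := by
      rw [← hg w]; exact φ.toEquiv.apply_symm_apply _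
    exact Sum.inl_injective ((hf (g w)).symm.trans h1)
  have hinr : ∀ e, (φ (Sum.inr e)).isRight := by
    intro e
    rcases h : φ (Sum.inr e) with w | e'
    · exfalso
      have h1 : φ.symm (Sum.inl w) = Sum.inr e := by rw [← h]; exact φ.toEquiv.symm_apply_apply _
      rw [hg w] at h1
      exact Sum.inl_ne_inr h1
    · rfl
  have hinr' : ∀ e, (φ.symm (Sum.inr e)).isRight := by
    intro e
    rcases h : φ.symm (Sum.inr e) with w | e'
    · exfalso
      have h1 : φ (Sum.inl w) = Sum.inr e := by rw [← h]; exact φ.toEquiv.apply_symm_apply _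
      rw [hf w] at h1
      exact Sum.inl_ne_inr h1
    · rfl
  refine ⟨⟨Equiv.mk f g hgf hfg, ?_⟩⟩
  intro v w
  show H.Adj (f v) (f w) ↔ G.Adj v w
  constructor
  · intro h
    have := adj_map φ.symm g hg hinr' h
    rwa [hgf v, hgf w] at this
  · exact adj_map φ f hf hinr

lemma card2_adj [Fintype V] (h2 : Fintype.card V = 2) {v₀ w₀ : V} (h : G.Adj v₀ w₀)
    (a b : V) : G.Adj a b ↔ a ≠ b := by
  classical
  constructor
  · exact fun hab => hab.ne
  · intro hab
    have hne := h.ne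
    have huniv : ({v₀, w₀} : Finset V) = Finset.univ := by
      apply Finset.eq_univ_of_card
      rw [Finset.card_insert_of_notMem (by simpa using hne), Finset.card_singleton, h2]
    have ha : a ∈ ({v₀, w₀} : Finset V) := huniv ▸ Finset.mem_univ a
    have hb : b ∈ ({v₀, w₀} : Finset V) := huniv ▸ Finset.mem_univ b
    simp only [Finset.mem_insert, Finset.mem_singleton] at ha hb
    rcases ha with rfl | rfl <;> rcases hb with rfl | rfl
    · exact absurd rfl hab
    · exact h
    · exact h.symm
    · exact absurd rfl hab

lemma backward_small {W : Type*} [Fintype V] [Fintype W] {H : SimpleGraph W}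
    (hV : Fintype.card V ≤ 2) (hW : Fintype.card W ≤ 2)
    (φ : qGraph G ≃g qGraph H) : Nonempty (G ≃g H) := by
  classical
  have hcard := Fintype.card_congr φ.toEquiv
  rw [Fintype.card_sum, Fintype.card_sum] at hcard
  by_cases hG : ∃ v w, G.Adj v w
  · obtain ⟨v₀, w₀, hvw⟩ := hG
    have hBG : 1 < Fintype.card {p : V × V // G.Adj p.1 p.2} :=
      Fintype.one_lt_card_iff_nontrivial.mpr ⟨⟨(v₀, w₀), hvw⟩, ⟨(w₀, v₀), hvw.symm⟩,
        fun h => hvw.ne (congrArg (fun x => x.1.1) h)⟩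
    have hVc : 1 < Fintype.card V := Fintype.one_lt_card_iff_nontrivial.mpr ⟨v₀, w₀, hvw.ne⟩
    have hH : ∃ v w, H.Adj v w := by
      by_contra hH
      push_neg at hH
      haveI : IsEmpty {p : W × W // H.Adj p.1 p.2} := ⟨fun p => hH _ _ p.2⟩
      rw [Fintype.card_eq_zero (α := {p : W × W // H.Adj p.1 p.2})] at hcard
      omega
    obtain ⟨v₁, w₁, hvw'⟩ := hH
    have hBH : 1 < Fintype.card {p : W × W // H.Adj p.1 p.2} :=
      Fintype.one_lt_card_iff_nontrivial.mpr ⟨⟨(v₁, w₁), hvw'⟩, ⟨(w₁, v₁), hvw'.symm⟩,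
        fun h => hvw'.ne (congrArg (fun x => x.1.1) h)⟩
    have hWc : 1 < Fintype.card W := Fintype.one_lt_card_iff_nontrivial.mpr ⟨v₁, w₁, hvw'.ne⟩
    have hV2 : Fintype.card V = 2 := by omega
    have hW2 : Fintype.card W = 2 := by omega
    have f := Fintype.equivOfCardEq (hV2.trans hW2.symm)
    refine ⟨⟨f, ?_⟩⟩
    intro a b
    rw [card2_adj hW2 hvw', card2_adj hV2 hvw, f.injective.ne_iff]
  · push_neg at hG
    haveI hBG : IsEmpty {p : V × V // G.Adj p.1 p.2} := ⟨fun p => hG _ _ p.2⟩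
    rw [Fintype.card_eq_zero (α := {p : V × V // G.Adj p.1 p.2})] at hcard
    have hH : ∀ v w, ¬H.Adj v w := by
      intro v w hvw
      have hBH : 1 < Fintype.card {p : W × W // H.Adj p.1 p.2} :=
        Fintype.one_lt_card_iff_nontrivial.mpr ⟨⟨(v, w), hvw⟩, ⟨(w, v), hvw.symm⟩,
          fun h => hvw.ne (congrArg (fun x => x.1.1) h)⟩
      have hWc : 1 < Fintype.card W := Fintype.one_lt_card_iff_nontrivial.mpr ⟨v, w, hvw.ne⟩
      omega
    haveI hBH : IsEmpty {p : W × W // H.Adj p.1 p.2} := ⟨fun p => hH _ _ p.2⟩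
    rw [Fintype.card_eq_zero (α := {p : W × W // H.Adj p.1 p.2})] at hcard
    have f := Fintype.equivOfCardEq (by omega : Fintype.card V = Fintype.card W)
    exact ⟨⟨f, by intro a b; simp [hG, hH]⟩⟩

end Q16

theorem statement16 {V W : Type*} [Fintype V] [Fintype W]
    (G : SimpleGraph V) (H : SimpleGraph W) :
    Nonempty (G ≃g H) ↔ Nonempty (qGraph G ≃g qGraph H) := by
  constructor
  · rintro ⟨e⟩
    exact ⟨Q16.qIsoOfIso e⟩
  · rintro ⟨φ⟩
    by_cases hV : 3 ≤ Fintype.card V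
    · exact Q16.backward_big hV φ
    by_cases hW : 3 ≤ Fintype.card W
    · obtain ⟨e⟩ := Q16.backward_big hW φ.symm
      exact ⟨e.symm⟩
    · exact Q16.backward_small (by omega) (by omega) φ
end

section
/- For every graph G, the graph q(G) is (diamond, P_6)-free, where q(G) is defined as follows: its vertex set is the disjoint union of A = V(G), C = E(G), and the set B of all ordered pairs (v,w) with vw an edge of G; A and C are independent sets in q(G) and every vertex of A is adjacent to every vertex of C; for each edge e = vw of G, the pairs of vertices {v,(v,w)}, {(v,w),e}, {e,(w,v)} and {(w,v),w} are adjacent in q(G); and q(G) has no other edges. -/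
open SimpleGraph

/-- The graph `q(G)` (second construction): its vertices are `A = V(G)`, `C = E(G)`
and the set `B` of all ordered pairs `(v, w)` with `vw` an edge of `G`; the sets `A`
and `C` are independent and `A` is complete to `C`; for each edge `e = vw` of `G`
the vertex `v` is adjacent to `(v, w)`, the vertex `(v, w)` is adjacent to `e`, the
vertex `e` is adjacent to `(w, v)`, and `(w, v)` is adjacent to `w`; there are no
other edges. -/
def qGraph2 {V : Type*} (G : SimpleGraph V) :
    SimpleGraph (V ⊕ (↥G.edgeSet ⊕ {p : V × V // G.Adj p.1 p.2})) :=
  SimpleGraph.fromRel (fun a b =>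
    match a, b with
    | Sum.inl _, Sum.inr (Sum.inl _) => True
    | Sum.inl v, Sum.inr (Sum.inr e) => v = e.1.1
    | Sum.inr (Sum.inl c), Sum.inr (Sum.inr e) => (c : Sym2 V) = s(e.1.1, e.1.2)
    | _, _ => False)

section Aux

variable {V : Type*} {G : SimpleGraph V}

/-- type of a vertex of qGraph2: 0 = A, 1 = B, 2 = C -/
def qType (x : V ⊕ (↥G.edgeSet ⊕ {p : V × V // G.Adj p.1 p.2})) : Fin 3 :=
  match x with
  | Sum.inl _ => 0
  | Sum.inr (Sum.inl _) => 2
  | Sum.inr (Sum.inr _) => 1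

lemma adj_ne_qType {x y : V ⊕ (↥G.edgeSet ⊕ {p : V × V // G.Adj p.1 p.2})}
    (h : (qGraph2 G).Adj x y) : qType x ≠ qType y := by
  rcases x with v | c | e <;> rcases y with w | d | f <;>
    simp_all [qGraph2, SimpleGraph.fromRel_adj, qType]

lemma adj_qAC {x y : V ⊕ (↥G.edgeSet ⊕ {p : V × V // G.Adj p.1 p.2})}
    (hx : qType x = 0) (hy : qType y = 2) : (qGraph2 G).Adj x y := by
  rcases x with v | c | e <;> rcases y with w | d | f <;>
    simp_all [qGraph2, SimpleGraph.fromRel_adj, qType]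

lemma eq_of_qA {x y b : V ⊕ (↥G.edgeSet ⊕ {p : V × V // G.Adj p.1 p.2})}
    (hxb : (qGraph2 G).Adj x b) (hyb : (qGraph2 G).Adj y b)
    (hb : qType b = 1) (hx : qType x = 0) (hy : qType y = 0) : x = y := by
  rcases x with v | c | e <;> rcases y with w | d | f <;> rcases b with u | cb | eb <;>
    simp_all [qGraph2, SimpleGraph.fromRel_adj, qType]

lemma eq_of_qC {x y b : V ⊕ (↥G.edgeSet ⊕ {p : V × V // G.Adj p.1 p.2})}
    (hxb : (qGraph2 G).Adj x b) (hyb : (qGraph2 G).Adj y b)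
    (hb : qType b = 1) (hx : qType x = 2) (hy : qType y = 2) : x = y := by
  rcases x with v | c | e <;> rcases y with w | d | f <;> rcases b with u | cb | eb <;>
    simp_all [qGraph2, SimpleGraph.fromRel_adj, qType]
  exact Subtype.ext (by simp_all)

lemma eq_of_qB {x y a c : V ⊕ (↥G.edgeSet ⊕ {p : V × V // G.Adj p.1 p.2})}
    (hxa : (qGraph2 G).Adj x a) (hya : (qGraph2 G).Adj y a)
    (hxc : (qGraph2 G).Adj x c) (hyc : (qGraph2 G).Adj y c)
    (ha : qType a = 0) (hc : qType c = 2)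
    (hx : qType x = 1) (hy : qType y = 1) : x = y := by
  rcases x with v | cx | e <;> rcases y with w | cy | f <;>
    rcases a with u | ca | ea <;> rcases c with z | cc | ec <;>
    simp_all [qGraph2, SimpleGraph.fromRel_adj, qType]
  rcases hyc with h | h
  · exact Subtype.ext (Prod.ext hya (by have h3 := congrArg Prod.snd h; exact h3))
  · have h2 : f.val.1 = f.val.2 := congrArg Prod.fst h
    exact absurd h2 (G.ne_of_adj f.2)

lemma fin3_aux : ∀ a b c d : Fin 3, a ≠ b → c ≠ a → c ≠ b → d ≠ a → d ≠ b → c = d := by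
  decide

set_option maxRecDepth 100000 in
lemma noP6types : ¬ ∃ t : Fin 6 → Fin 3,
    (∀ i j : Fin 6, (i.val + 1 = j.val ∨ j.val + 1 = i.val) → ¬ t i = t j) ∧
    (∀ i j : Fin 6, ¬ i = j → ¬(i.val + 1 = j.val ∨ j.val + 1 = i.val) →
      ¬(t i = 0 ∧ t j = 2)) ∧
    (∀ i j k : Fin 6, ¬((i.val + 1 = j.val ∨ j.val + 1 = i.val) ∧
      (j.val + 1 = k.val ∨ k.val + 1 = j.val) ∧ ¬ i = k ∧ t j = 1 ∧
      ((t i = 0 ∧ t k = 0) ∨ (t i = 2 ∧ t k = 2)))) := by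
  decide

end Aux

theorem statement17 {V : Type*} [Fintype V] (G : SimpleGraph V) :
    _root_.Free diamond (qGraph2 G) ∧ _root_.Free (SimpleGraph.pathGraph 6) (qGraph2 G) := by
  constructor
  · constructor
    intro f
    have hd : ∀ i j : Fin 4, i ≠ j → ¬(i = 2 ∧ j = 3) → ¬(j = 2 ∧ i = 3) →
        (qGraph2 G).Adj (f i) (f j) := by
      intro i j h1 h2 h3
      refine f.map_adj_iff.mpr ?_
      simp only [diamond, twoP1PlusP2, compl_adj, SimpleGraph.fromRel_adj]
      tauto
    have h01 := hd 0 1 (by decide) (by decide) (by decide)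
    have h02 := hd 0 2 (by decide) (by decide) (by decide)
    have h03 := hd 0 3 (by decide) (by decide) (by decide)
    have h12 := hd 1 2 (by decide) (by decide) (by decide)
    have h13 := hd 1 3 (by decide) (by decide) (by decide)
    have hne : f 2 ≠ f 3 := fun h => by simpa using f.injective h
    have t01 := adj_ne_qType h01
    have t02 := adj_ne_qType h02
    have t03 := adj_ne_qType h03
    have t12 := adj_ne_qType h12
    have t13 := adj_ne_qType h13
    have t23 : qType (f 2) = qType (f 3) :=
      fin3_aux _ _ _ _ t01 (Ne.symm t02) (Ne.symm t12) (Ne.symm t03) (Ne.symm t13)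
    have h3cases : qType (f 2) = 0 ∨ qType (f 2) = 1 ∨ qType (f 2) = 2 := by omega
    rcases h3cases with h2 | h2 | h2
    · -- f 2, f 3 in A; one of f 0, f 1 is in B
      have hb : qType (f 0) = 1 ∨ qType (f 1) = 1 := by omega
      rcases hb with hb | hb
      · exact hne (eq_of_qA h02.symm h03.symm hb h2 (t23 ▸ h2))
      · exact hne (eq_of_qA h12.symm h13.symm hb h2 (t23 ▸ h2))
    · -- f 2, f 3 in B; f 0, f 1 are A and C in some order
      have hac : (qType (f 0) = 0 ∧ qType (f 1) = 2) ∨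
          (qType (f 0) = 2 ∧ qType (f 1) = 0) := by omega
      rcases hac with ⟨ha, hc⟩ | ⟨hc, ha⟩
      · exact hne (eq_of_qB h02.symm h03.symm h12.symm h13.symm ha hc h2 (t23 ▸ h2))
      · exact hne (eq_of_qB h12.symm h13.symm h02.symm h03.symm ha hc h2 (t23 ▸ h2))
    · -- f 2, f 3 in C; one of f 0, f 1 is in B
      have hb : qType (f 0) = 1 ∨ qType (f 1) = 1 := by omega
      rcases hb with hb | hb
      · exact hne (eq_of_qC h02.symm h03.symm hb h2 (t23 ▸ h2))
      · exact hne (eq_of_qC h12.symm h13.symm hb h2 (t23 ▸ h2))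
  · constructor
    intro f
    set t : Fin 6 → Fin 3 := fun i => qType (f i) with ht
    refine noP6types ⟨t, ?_, ?_, ?_⟩
    · intro i j hij
      exact adj_ne_qType (f.map_adj_iff.mpr (pathGraph_adj.mpr hij))
    · intro i j hij hnadj
      rintro ⟨h0, h2⟩
      exact hnadj (pathGraph_adj.mp (f.map_adj_iff.mp (adj_qAC h0 h2)))
    · intro i j k
      rintro ⟨hij, hjk, hik, hj, hbad⟩
      have hadj1 : (qGraph2 G).Adj (f i) (f j) := f.map_adj_iff.mpr (pathGraph_adj.mpr hij)
      have hadj2 : (qGraph2 G).Adj (f k) (f j) :=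
        f.map_adj_iff.mpr (pathGraph_adj.mpr (by tauto))
      have hne : f i ≠ f k := fun h => hik (f.injective h)
      rcases hbad with ⟨h0, h2⟩ | ⟨h0, h2⟩
      · exact hne (eq_of_qA hadj1 hadj2 hj h0 h2)
      · exact hne (eq_of_qC hadj1 hadj2 hj h0 h2)
end

section
/- For all graphs G and H, G is isomorphic to H if and only if q(G*) is isomorphic to q(H*), where: G* denotes the graph obtained from G by adding four new pairwise adjacent vertices each of which is adjacent to every vertex of G; and for a graph F, the graph q(F) has vertex set the disjoint union of A = V(F), C = E(F), and the set B of all ordered pairs (v,w) with vw an edge of F, where A and C are independent sets in q(F), every vertex of A is adjacent to every vertex of C, for each edge e = vw of F the pairs of vertices {v,(v,w)}, {(v,w),e}, {e,(w,v)} and {(w,v),w} are adjacent in q(F), and q(F) has no other edges. -/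
open SimpleGraph

/-- The graph `G*` obtained from `G` by adding four new pairwise adjacent vertices,
each of which is adjacent to every vertex of `G`. -/
def addK4 {V : Type*} (G : SimpleGraph V) : SimpleGraph (V ⊕ Fin 4) :=
  SimpleGraph.fromRel (fun a b =>
    match a, b with
    | Sum.inl v, Sum.inl w => G.Adj v w
    | _, _ => True)

section adjlemmas
variable {V : Type*} {G : SimpleGraph V}

lemma addK4_adj_ll {v w : V} : (addK4 G).Adj (Sum.inl v) (Sum.inl w) ↔ G.Adj v w := by
  simp only [addK4, fromRel_adj]
  constructor
  · rintro ⟨-, h | h⟩; exact h; exact h.symm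
  · intro h; exact ⟨by simp [h.ne], Or.inl h⟩

lemma addK4_adj_lr {v : V} {i : Fin 4} : (addK4 G).Adj (Sum.inl v) (Sum.inr i) := by
  simp [addK4, fromRel_adj]

lemma addK4_adj_rr {i j : Fin 4} : (addK4 G).Adj (Sum.inr i) (Sum.inr j) ↔ i ≠ j := by
  simp [addK4, fromRel_adj, Sum.inr.injEq]

variable {F : SimpleGraph V}

lemma q_adj_AC (v : V) (c : ↥F.edgeSet) :
    (qGraph2 F).Adj (Sum.inl v) (Sum.inr (Sum.inl c)) := by
  simp [qGraph2, fromRel_adj]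

lemma q_adj_AB {v : V} {p : {p : V × V // F.Adj p.1 p.2}} :
    (qGraph2 F).Adj (Sum.inl v) (Sum.inr (Sum.inr p)) ↔ v = p.1.1 := by
  simp [qGraph2, fromRel_adj]

lemma q_adj_CB {c : ↥F.edgeSet} {p : {p : V × V // F.Adj p.1 p.2}} :
    (qGraph2 F).Adj (Sum.inr (Sum.inl c)) (Sum.inr (Sum.inr p)) ↔
      (c : Sym2 V) = s(p.1.1, p.1.2) := by
  simp [qGraph2, fromRel_adj]

lemma q_not_adj_AA {v w : V} : ¬ (qGraph2 F).Adj (Sum.inl v) (Sum.inl w) := by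
  simp [qGraph2, fromRel_adj]

lemma q_not_adj_CC {c c' : ↥F.edgeSet} :
    ¬ (qGraph2 F).Adj (Sum.inr (Sum.inl c)) (Sum.inr (Sum.inl c')) := by
  simp [qGraph2, fromRel_adj]

lemma q_not_adj_BB {p p' : {p : V × V // F.Adj p.1 p.2}} :
    ¬ (qGraph2 F).Adj (Sum.inr (Sum.inr p)) (Sum.inr (Sum.inr p')) := by
  simp [qGraph2, fromRel_adj]

end adjlemmas

section preds
variable {X Y : Type*}

def DegTwo (Q : SimpleGraph X) (x : X) : Prop :=
  ∃ y z, y ≠ z ∧ Q.Adj x y ∧ Q.Adj x z ∧ ∀ u, Q.Adj x u → u = y ∨ u = z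

def IsAp (Q : SimpleGraph X) (x : X) : Prop :=
  ¬ DegTwo Q x ∧ ∃ y z u, y ≠ z ∧ y ≠ u ∧ z ≠ u ∧ DegTwo Q y ∧ DegTwo Q z ∧ DegTwo Q u ∧
    Q.Adj x y ∧ Q.Adj x z ∧ Q.Adj x u

def IsCp (Q : SimpleGraph X) (x : X) : Prop := ¬ DegTwo Q x ∧ ¬ IsAp Q x

def RelA (Q : SimpleGraph X) (x y : X) : Prop :=
  x ≠ y ∧ ∃ b1 c b2, DegTwo Q b1 ∧ IsCp Q c ∧ DegTwo Q b2 ∧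
    Q.Adj x b1 ∧ Q.Adj b1 c ∧ Q.Adj c b2 ∧ Q.Adj b2 y

variable {Q : SimpleGraph X} {Q' : SimpleGraph Y}

lemma degTwo_map (e : Q ≃g Q') {x : X} (h : DegTwo Q x) : DegTwo Q' (e x) := by
  obtain ⟨y, z, hyz, hxy, hxz, hall⟩ := h
  refine ⟨e y, e z, fun h => hyz (e.injective h), e.map_adj_iff.2 hxy, e.map_adj_iff.2 hxz, ?_⟩
  intro u hu
  have : Q.Adj x (e.symm u) := by
    have := e.symm.map_adj_iff.2 hu
    simpa using this
  rcases hall _ this with h | h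
  · left; rw [← h]; simp
  · right; rw [← h]; simp

lemma degTwo_iff (e : Q ≃g Q') (x : X) : DegTwo Q' (e x) ↔ DegTwo Q x := by
  constructor
  · intro h; have := degTwo_map e.symm h; simpa using this
  · exact degTwo_map e

lemma isAp_map (e : Q ≃g Q') {x : X} (h : IsAp Q x) : IsAp Q' (e x) := by
  obtain ⟨hnd, y, z, u, h1, h2, h3, d1, d2, d3, a1, a2, a3⟩ := h
  refine ⟨by rw [degTwo_iff]; exact hnd, e y, e z, e u,
    fun h => h1 (e.injective h), fun h => h2 (e.injective h), fun h => h3 (e.injective h),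
    degTwo_map e d1, degTwo_map e d2, degTwo_map e d3,
    e.map_adj_iff.2 a1, e.map_adj_iff.2 a2, e.map_adj_iff.2 a3⟩

lemma isAp_iff' (e : Q ≃g Q') (x : X) : IsAp Q' (e x) ↔ IsAp Q x := by
  constructor
  · intro h; have := isAp_map e.symm h; simpa using this
  · exact isAp_map e

lemma isCp_iff' (e : Q ≃g Q') (x : X) : IsCp Q' (e x) ↔ IsCp Q x := by
  unfold IsCp; rw [degTwo_iff, isAp_iff']

lemma relA_map (e : Q ≃g Q') {x y : X} (h : RelA Q x y) : RelA Q' (e x) (e y) := by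
  obtain ⟨hxy, b1, c, b2, d1, dc, d2, a1, a2, a3, a4⟩ := h
  exact ⟨fun h => hxy (e.injective h), e b1, e c, e b2, degTwo_map e d1,
    (isCp_iff' e c).2 dc, degTwo_map e d2, e.map_adj_iff.2 a1, e.map_adj_iff.2 a2,
    e.map_adj_iff.2 a3, e.map_adj_iff.2 a4⟩

lemma relA_iff (e : Q ≃g Q') (x y : X) : RelA Q' (e x) (e y) ↔ RelA Q x y := by
  constructor
  · intro h; have := relA_map e.symm h; simpa using this
  · exact relA_map e

end preds

section charac
variable {V : Type*} {G : SimpleGraph V}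

local notation "F" => addK4 G
local notation "Q" => qGraph2 (addK4 G)

-- every vertex of addK4 G has three distinct neighbours
lemma addK4_three_nbrs (v : (V ⊕ Fin 4)) :
    ∃ w1 w2 w3, w1 ≠ w2 ∧ w1 ≠ w3 ∧ w2 ≠ w3 ∧ (F).Adj v w1 ∧ (F).Adj v w2 ∧ (F).Adj v w3 := by
  cases v with
  | inl g =>
      exact ⟨Sum.inr 0, Sum.inr 1, Sum.inr 2, by simp, by simp, by simp [Fin.ext_iff],
        addK4_adj_lr, addK4_adj_lr, addK4_adj_lr⟩
  | inr i =>
      obtain ⟨j, k, l, h⟩ : ∃ j k l : Fin 4, j ≠ k ∧ j ≠ l ∧ k ≠ l ∧ i ≠ j ∧ i ≠ k ∧ i ≠ l := by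
        revert i; decide
      exact ⟨Sum.inr j, Sum.inr k, Sum.inr l, by simp [h.1], by simp [h.2.1], by simp [h.2.2.1],
        addK4_adj_rr.2 h.2.2.2.1, addK4_adj_rr.2 h.2.2.2.2.1, addK4_adj_rr.2 h.2.2.2.2.2⟩


lemma inrinl_inj {c1 c2 : ↥(F).edgeSet}
    (h : (Sum.inr (Sum.inl c1) : (V ⊕ Fin 4) ⊕ (↥(F).edgeSet ⊕ {p : (V ⊕ Fin 4) × (V ⊕ Fin 4) // (F).Adj p.1 p.2})) = Sum.inr (Sum.inl c2)) : c1 = c2 := by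
  injection h with h; injection h

lemma inlinr_inj {i j : Fin 4}
    (h : (Sum.inl (Sum.inr i) : (V ⊕ Fin 4) ⊕ (↥(F).edgeSet ⊕ {p : (V ⊕ Fin 4) × (V ⊕ Fin 4) // (F).Adj p.1 p.2})) = Sum.inl (Sum.inr j)) : i = j := by
  injection h with h; injection h

lemma Bvert_eq {p q : {p : (V ⊕ Fin 4) × (V ⊕ Fin 4) // (F).Adj p.1 p.2}}
    (h1 : p.1.1 = q.1.1) (h2 : p.1.2 = q.1.2) :
    (Sum.inr (Sum.inr p) : (V ⊕ Fin 4) ⊕ (↥(F).edgeSet ⊕ {p : (V ⊕ Fin 4) × (V ⊕ Fin 4) // (F).Adj p.1 p.2})) = Sum.inr (Sum.inr q) := by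
  congr 1
  congr 1
  exact Subtype.ext (by rw [Prod.ext_iff]; exact ⟨h1, h2⟩)

-- three distinct edges of addK4 G
lemma addK4_three_edges :
    ∃ c1 c2 c3 : ↥(F).edgeSet, c1 ≠ c2 ∧ c1 ≠ c3 ∧ c2 ≠ c3 := by
  have m01 : s((Sum.inr 0 : V ⊕ Fin 4), Sum.inr 1) ∈ (F).edgeSet := (mem_edgeSet (addK4 G)).2 (addK4_adj_rr.2 (by decide))
  have m02 : s((Sum.inr 0 : V ⊕ Fin 4), Sum.inr 2) ∈ (F).edgeSet := (mem_edgeSet (addK4 G)).2 (addK4_adj_rr.2 (by decide))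
  have m12 : s((Sum.inr 1 : V ⊕ Fin 4), Sum.inr 2) ∈ (F).edgeSet := (mem_edgeSet (addK4 G)).2 (addK4_adj_rr.2 (by decide))
  refine ⟨⟨_, m01⟩, ⟨_, m02⟩, ⟨_, m12⟩, ?_, ?_, ?_⟩ <;>
    · intro h
      rw [Subtype.ext_iff] at h
      simp [Sym2.eq_iff, Fin.ext_iff] at h

lemma degTwo_B (p : {p : (V ⊕ Fin 4) × (V ⊕ Fin 4) // (F).Adj p.1 p.2}) :
    DegTwo (Q) (Sum.inr (Sum.inr p)) := by
  refine ⟨Sum.inl p.1.1, Sum.inr (Sum.inl ⟨s(p.1.1, p.1.2), p.2⟩), by simp,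
    (q_adj_AB.2 rfl).symm, (q_adj_CB.2 rfl).symm, ?_⟩
  rintro (v | c | p') h
  · left
    have := q_adj_AB.1 h.symm
    rw [this]
  · right
    have := q_adj_CB.1 h.symm
    congr 1
    exact congrArg Sum.inl (Subtype.ext this)
  · exact absurd h q_not_adj_BB

lemma not_degTwo_A (v : V ⊕ Fin 4) : ¬ DegTwo (Q) (Sum.inl v) := by
  rintro ⟨y, z, hyz, -, -, hall⟩
  obtain ⟨c1, c2, c3, h12, h13, h23⟩ := addK4_three_edges (G := G)
  have e1 := hall _ (q_adj_AC v c1)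
  have e2 := hall _ (q_adj_AC v c2)
  have e3 := hall _ (q_adj_AC v c3)
  rcases e1 with e1 | e1 <;> rcases e2 with e2 | e2 <;> rcases e3 with e3 | e3 <;>
    first
    | exact h12 (inrinl_inj (e1.trans e2.symm))
    | exact h13 (inrinl_inj (e1.trans e3.symm))
    | exact h23 (inrinl_inj (e2.trans e3.symm))

lemma not_degTwo_C (c : ↥(F).edgeSet) : ¬ DegTwo (Q) (Sum.inr (Sum.inl c)) := by
  rintro ⟨y, z, hyz, -, -, hall⟩
  have e1 := hall _ (q_adj_AC (Sum.inr (0 : Fin 4)) c).symm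
  have e2 := hall _ (q_adj_AC (Sum.inr (1 : Fin 4)) c).symm
  have e3 := hall _ (q_adj_AC (Sum.inr (2 : Fin 4)) c).symm
  rcases e1 with e1 | e1 <;> rcases e2 with e2 | e2 <;> rcases e3 with e3 | e3 <;>
    first
    | exact absurd (inlinr_inj (G := G) (e1.trans e2.symm)) (by decide)
    | exact absurd (inlinr_inj (G := G) (e1.trans e3.symm)) (by decide)
    | exact absurd (inlinr_inj (G := G) (e2.trans e3.symm)) (by decide)

lemma degTwo_char (x) : DegTwo (Q) x ↔ ∃ p, x = Sum.inr (Sum.inr p) := by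
  constructor
  · intro h
    rcases x with v | c | p
    · exact absurd h (not_degTwo_A v)
    · exact absurd h (not_degTwo_C c)
    · exact ⟨p, rfl⟩
  · rintro ⟨p, rfl⟩; exact degTwo_B p

lemma isAp_A (v : V ⊕ Fin 4) : IsAp (Q) (Sum.inl v) := by
  obtain ⟨w1, w2, w3, h12, h13, h23, a1, a2, a3⟩ := addK4_three_nbrs (G := G) v
  refine ⟨not_degTwo_A v, Sum.inr (Sum.inr ⟨(v, w1), a1⟩), Sum.inr (Sum.inr ⟨(v, w2), a2⟩),
    Sum.inr (Sum.inr ⟨(v, w3), a3⟩), by simp [Subtype.ext_iff, Prod.ext_iff, h12],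
    by simp [Subtype.ext_iff, Prod.ext_iff, h13], by simp [Subtype.ext_iff, Prod.ext_iff, h23],
    degTwo_B _, degTwo_B _, degTwo_B _, q_adj_AB.2 rfl, q_adj_AB.2 rfl, q_adj_AB.2 rfl⟩

lemma not_isAp_C (c : ↥(F).edgeSet) : ¬ IsAp (Q) (Sum.inr (Sum.inl c)) := by
  rintro ⟨-, y, z, u, hyz, hyu, hzu, dy, dz, du, ay, az, au⟩
  obtain ⟨py, rfl⟩ := (degTwo_char y).1 dy
  obtain ⟨pz, rfl⟩ := (degTwo_char z).1 dz
  obtain ⟨pu, rfl⟩ := (degTwo_char u).1 du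
  have hy := q_adj_CB.1 ay
  have hz := q_adj_CB.1 az
  have hu := q_adj_CB.1 au
  have hz' := hy.symm.trans hz
  have hu' := hy.symm.trans hu
  rw [Sym2.eq_iff] at hz' hu'
  rcases hz' with ⟨z1, z2⟩ | ⟨z1, z2⟩
  · exact hyz (Bvert_eq z1 z2)
  · rcases hu' with ⟨u1, u2⟩ | ⟨u1, u2⟩
    · exact hyu (Bvert_eq u1 u2)
    · exact hzu (Bvert_eq (z2.symm.trans u2) (z1.symm.trans u1))

lemma isAp_char (x) : IsAp (Q) x ↔ ∃ v, x = Sum.inl v := by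
  constructor
  · intro h
    rcases x with v | c | p
    · exact ⟨v, rfl⟩
    · exact absurd h (not_isAp_C c)
    · exact absurd (degTwo_B p) h.1
  · rintro ⟨v, rfl⟩; exact isAp_A v

lemma isCp_char (x) : IsCp (Q) x ↔ ∃ c, x = Sum.inr (Sum.inl c) := by
  constructor
  · rintro ⟨hnd, hna⟩
    rcases x with v | c | p
    · exact absurd (isAp_A v) hna
    · exact ⟨c, rfl⟩
    · exact absurd (degTwo_B p) hnd
  · rintro ⟨c, rfl⟩
    exact ⟨not_degTwo_C c, not_isAp_C c⟩

lemma relA_char (v w : V ⊕ Fin 4) : RelA (Q) (Sum.inl v) (Sum.inl w) ↔ (F).Adj v w := by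
  constructor
  · rintro ⟨hne, b1, c, b2, d1, dc, d2, a1, a2, a3, a4⟩
    obtain ⟨p1, rfl⟩ := (degTwo_char b1).1 d1
    obtain ⟨c0, rfl⟩ := (isCp_char c).1 dc
    obtain ⟨p2, rfl⟩ := (degTwo_char b2).1 d2
    have hv : v = p1.1.1 := q_adj_AB.1 a1
    have hc1 : (c0 : Sym2 _) = s(p1.1.1, p1.1.2) := q_adj_CB.1 a2.symm
    have hc2 : (c0 : Sym2 _) = s(p2.1.1, p2.1.2) := q_adj_CB.1 a3
    have hw : w = p2.1.1 := q_adj_AB.1 a4.symm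
    have hvw : v ≠ w := fun h => hne (congrArg Sum.inl h)
    have heq := hc1.symm.trans hc2
    rw [Sym2.eq_iff] at heq
    rcases heq with ⟨h1, h2⟩ | ⟨h1, h2⟩
    · exact absurd (hv.trans (h1.trans hw.symm)) hvw
    · have hadj := p1.2
      rw [← hv, h2, ← hw] at hadj
      exact hadj
  · intro h
    refine ⟨fun he => h.ne (Sum.inl_injective he), Sum.inr (Sum.inr ⟨(v, w), h⟩),
      Sum.inr (Sum.inl ⟨s(v, w), h⟩), Sum.inr (Sum.inr ⟨(w, v), h.symm⟩),
      degTwo_B _, (isCp_char _).2 ⟨_, rfl⟩, degTwo_B _, q_adj_AB.2 rfl,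
      (q_adj_CB.2 rfl).symm, q_adj_CB.2 Sym2.eq_swap, (q_adj_AB.2 rfl).symm⟩

end charac


section functor
variable {X Y : Type*} {F : SimpleGraph X} {F' : SimpleGraph Y}

private def qRel (F : SimpleGraph X) :
    (X ⊕ (↥F.edgeSet ⊕ {p : X × X // F.Adj p.1 p.2})) →
    (X ⊕ (↥F.edgeSet ⊕ {p : X × X // F.Adj p.1 p.2})) → Prop := fun a b =>
  match a, b with
  | Sum.inl _, Sum.inr (Sum.inl _) => True
  | Sum.inl v, Sum.inr (Sum.inr e) => v = e.1.1
  | Sum.inr (Sum.inl c), Sum.inr (Sum.inr e) => (c : Sym2 X) = s(e.1.1, e.1.2)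
  | _, _ => False

lemma qGraph2_eq (F : SimpleGraph X) : qGraph2 F = SimpleGraph.fromRel (qRel F) := rfl

def pairEquiv (ψ : F ≃g F') : {p : X × X // F.Adj p.1 p.2} ≃ {p : Y × Y // F'.Adj p.1 p.2} where
  toFun p := ⟨(ψ p.1.1, ψ p.1.2), ψ.map_adj_iff.2 p.2⟩
  invFun p := ⟨(ψ.symm p.1.1, ψ.symm p.1.2), ψ.symm.map_adj_iff.2 p.2⟩
  left_inv p := by simp
  right_inv p := by simp

noncomputable def qMap (ψ : F ≃g F') : qGraph2 F ≃g qGraph2 F' := by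
  refine ⟨Equiv.sumCongr ψ.toEquiv (Equiv.sumCongr ψ.mapEdgeSet (pairEquiv ψ)), ?_⟩
  have hval : ∀ c : ↥F.edgeSet, (ψ.mapEdgeSet c : Sym2 Y) = Sym2.map ψ (c : Sym2 X) := by
    intro c; rfl
  set f := Equiv.sumCongr ψ.toEquiv (Equiv.sumCongr ψ.mapEdgeSet (pairEquiv ψ)) with hf
  have key : ∀ a b, qRel F' (f a) (f b) ↔ qRel F a b := by
    rintro (v | c | p) (w | d | q) <;>
      simp only [hf, Equiv.sumCongr_apply, Sum.map_inl, Sum.map_inr, Equiv.coe_fn_mk, qRel, pairEquiv,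
        hval] <;>
      try rfl
    · exact ⟨fun h => ψ.injective h, fun h => congrArg ψ h⟩
    · constructor
      · intro h
        apply Sym2.map.injective ψ.injective
        rw [h, Sym2.map_pair_eq]
      · intro h
        rw [h, Sym2.map_pair_eq]
  intro a b
  rw [qGraph2_eq, qGraph2_eq, fromRel_adj, fromRel_adj, key, key]
  have : f a ≠ f b ↔ a ≠ b := by
    constructor
    · intro h he; exact h (congrArg f he)
    · intro h he; exact h (f.injective he)
  rw [this]

end functor


section addfunctor
variable {V W : Type*} {G : SimpleGraph V} {H : SimpleGraph W}

def addMap (e : G ≃g H) : addK4 G ≃g addK4 H := by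
  refine ⟨Equiv.sumCongr e.toEquiv (Equiv.refl _), ?_⟩
  rintro (v | i) (w | j) <;>
    simp only [Equiv.sumCongr_apply, Sum.map_inl, Sum.map_inr, Equiv.refl_apply]
  · rw [addK4_adj_ll, addK4_adj_ll]; exact e.map_adj_iff
  · simp [addK4_adj_lr]
  · exact ⟨fun _ => addK4_adj_lr.symm, fun _ => addK4_adj_lr.symm⟩
  · rw [addK4_adj_rr, addK4_adj_rr]
end addfunctor

section univ
variable {X Y : Type*}

def UnivF (K : SimpleGraph X) (x : X) : Prop := ∀ y, y ≠ x → K.Adj x y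

lemma univ_map {K : SimpleGraph X} {K' : SimpleGraph Y} (e : K ≃g K') {x : X}
    (h : UnivF K x) : UnivF K' (e x) := by
  intro y hy
  have h1 : e.symm y ≠ x := fun he => hy (by rw [← he]; simp)
  have := h _ h1
  have h2 := e.map_adj_iff.2 this
  simpa using h2

lemma univ_iff {K : SimpleGraph X} {K' : SimpleGraph Y} (e : K ≃g K') (x : X) :
    UnivF K' (e x) ↔ UnivF K x := by
  constructor
  · intro h; have := univ_map e.symm h; simpa using this
  · exact univ_map e

def UnivG {V : Type*} (G : SimpleGraph V) (v : V) : Prop := ∀ w, w ≠ v → G.Adj v w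

variable {V : Type*} {G : SimpleGraph V}

lemma univF_inr (i : Fin 4) : UnivF (addK4 G) (Sum.inr i) := by
  rintro (v | j) hy
  · exact addK4_adj_lr.symm
  · exact addK4_adj_rr.2 (fun h => hy (by rw [h]))

lemma univF_inl (v : V) : UnivF (addK4 G) (Sum.inl v) ↔ UnivG G v := by
  constructor
  · intro h w hw
    exact addK4_adj_ll.1 (h (Sum.inl w) (fun he => hw (Sum.inl_injective he)))
  · intro h
    rintro (w | i) hy
    · exact addK4_adj_ll.2 (h w (fun he => hy (by rw [he])))
    · exact addK4_adj_lr

lemma not_univF (x : V ⊕ Fin 4) (h : ¬ UnivF (addK4 G) x) :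
    ∃ v, x = Sum.inl v ∧ ¬ UnivG G v := by
  cases x with
  | inl v => exact ⟨v, rfl, fun hu => h ((univF_inl v).2 hu)⟩
  | inr i => exact absurd (univF_inr i) h

end univ

section cancel
variable {V W : Type*} [Fintype V] [Fintype W] {G : SimpleGraph V} {H : SimpleGraph W}

noncomputable def cancelK4 (ψ : addK4 G ≃g addK4 H) : G ≃g H := by
  classical
  -- the restriction to non-universal vertices
  have spec : ∀ v : V, ¬ UnivG G v → ∃ w, ψ (Sum.inl v) = Sum.inl w ∧ ¬ UnivG H w := by
    intro v hv
    have hnu : ¬ UnivF (addK4 H) (ψ (Sum.inl v)) := by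
      intro hu
      have := univ_map ψ.symm hu
      rw [RelIso.symm_apply_apply] at this
      exact hv ((univF_inl v).1 this)
    obtain ⟨w, hw, hwu⟩ := not_univF _ hnu
    exact ⟨w, hw, hwu⟩
  have spec' : ∀ w : W, ¬ UnivG H w → ∃ v, ψ.symm (Sum.inl w) = Sum.inl v ∧ ¬ UnivG G v := by
    intro w hw
    have hnu : ¬ UnivF (addK4 G) (ψ.symm (Sum.inl w)) := by
      intro hu
      have := univ_map ψ hu
      rw [RelIso.apply_symm_apply] at this
      exact hw ((univF_inl w).1 this)
    obtain ⟨v, hv, hvu⟩ := not_univF _ hnu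
    exact ⟨v, hv, hvu⟩
  let eR : {v : V // ¬ UnivG G v} ≃ {w : W // ¬ UnivG H w} :=
    { toFun := fun x => ⟨(spec x.1 x.2).choose, (spec x.1 x.2).choose_spec.2⟩
      invFun := fun y => ⟨(spec' y.1 y.2).choose, (spec' y.1 y.2).choose_spec.2⟩
      left_inv := by
        rintro ⟨v, hv⟩
        have h1 := (spec v hv).choose_spec.1
        have h2 := (spec' _ (spec v hv).choose_spec.2).choose_spec.1
        have h3 := congrArg ψ.symm h1
        rw [RelIso.symm_apply_apply] at h3
        exact Subtype.ext (Sum.inl_injective (h2.symm.trans h3.symm))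
      right_inv := by
        rintro ⟨w, hw⟩
        have h1 := (spec' w hw).choose_spec.1
        have h2 := (spec _ (spec' w hw).choose_spec.2).choose_spec.1
        have h3 := congrArg ψ h1
        rw [RelIso.apply_symm_apply] at h3
        exact Subtype.ext (Sum.inl_injective (h2.symm.trans h3.symm)) }
  have eRspec : ∀ (v : V) (hv : ¬ UnivG G v),
      ψ (Sum.inl v) = Sum.inl (eR ⟨v, hv⟩ : W) := fun v hv => (spec v hv).choose_spec.1
  -- cardinality of universal parts
  have hcardV : Fintype.card V = Fintype.card W := by
    have := Fintype.card_congr ψ.toEquiv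
    simp [Fintype.card_sum] at this
    omega
  have hcardR : Fintype.card {v : V // ¬ UnivG G v} = Fintype.card {w : W // ¬ UnivG H w} :=
    Fintype.card_congr eR
  have hU : Fintype.card {v : V // UnivG G v} = Fintype.card {w : W // UnivG H w} := by
    have h1 := Fintype.card_subtype_compl (fun v : V => UnivG G v)
    have h2 := Fintype.card_subtype_compl (fun w : W => UnivG H w)
    have h3 := Fintype.card_subtype_le (fun v : V => UnivG G v)
    have h4 := Fintype.card_subtype_le (fun w : W => UnivG H w)
    omega
  let eU : {v : V // UnivG G v} ≃ {w : W // UnivG H w} := Fintype.equivOfCardEq hU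
  let f : V ≃ W :=
    (Equiv.sumCompl (fun v => UnivG G v)).symm.trans
      ((Equiv.sumCongr eU eR).trans (Equiv.sumCompl (fun w => UnivG H w)))
  have fpos : ∀ (v : V) (h : UnivG G v), f v = (eU ⟨v, h⟩ : W) := by
    intro v h
    simp only [f, Equiv.trans_apply, Equiv.sumCompl_symm_apply_of_pos h,
      Equiv.sumCongr_apply, Sum.map_inl, Equiv.sumCompl_apply_inl]
  have fneg : ∀ (v : V) (h : ¬ UnivG G v), f v = (eR ⟨v, h⟩ : W) := by
    intro v h
    simp only [f, Equiv.trans_apply, Equiv.sumCompl_symm_apply_of_neg h,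
      Equiv.sumCongr_apply, Sum.map_inr, Equiv.sumCompl_apply_inr]
  have fU : ∀ (v : V) (h : UnivG G v), UnivG H (f v) := by
    intro v h; rw [fpos v h]; exact (eU ⟨v, h⟩).2
  have fNU : ∀ (v : V) (h : ¬ UnivG G v), ¬ UnivG H (f v) := by
    intro v h; rw [fneg v h]; exact (eR ⟨v, h⟩).2
  refine ⟨f, ?_⟩
  intro v w
  have hne : f v = f w ↔ v = w := ⟨fun h => f.injective h, fun h => congrArg f h⟩
  by_cases hv : UnivG G v <;> by_cases hw : UnivG G w
  · constructor
    · intro h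
      exact hv w (fun he => h.ne (congrArg f he.symm))
    · intro h
      exact (fU v hv) (f w) (fun he => h.ne (f.injective he).symm)
  · constructor
    · intro _
      refine hv w (fun he => hw (he ▸ hv))
    · intro _
      exact (fU v hv) (f w) (fun he => (fNU w hw) (he ▸ fU v hv))
  · constructor
    · intro _
      exact (hw v (fun he => hv (he ▸ hw))).symm
    · intro _
      exact ((fU w hw) (f v) (fun he => (fNU v hv) (he ▸ fU w hw))).symm
  · rw [fneg v hv, fneg w hw]
    rw [← addK4_adj_ll (G := G), ← addK4_adj_ll (G := H)]
    rw [← eRspec v hv, ← eRspec w hw]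
    exact ψ.map_adj_iff

end cancel

section recover
variable {V W : Type*} {G : SimpleGraph V} {H : SimpleGraph W}

noncomputable def recoverF (Φ : qGraph2 (addK4 G) ≃g qGraph2 (addK4 H)) :
    addK4 G ≃g addK4 H := by
  have specA : ∀ v : V ⊕ Fin 4, ∃ w, Φ (Sum.inl v) = Sum.inl w := by
    intro v
    exact (isAp_char _).1 ((isAp_iff' Φ (Sum.inl v)).2 (isAp_A v))
  have specB : ∀ w : W ⊕ Fin 4, ∃ v, Φ.symm (Sum.inl w) = Sum.inl v := by
    intro w
    exact (isAp_char _).1 ((isAp_iff' Φ.symm (Sum.inl w)).2 (isAp_A w))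
  let g : (V ⊕ Fin 4) ≃ (W ⊕ Fin 4) :=
    { toFun := fun v => (specA v).choose
      invFun := fun w => (specB w).choose
      left_inv := by
        intro v
        have h1 := (specA v).choose_spec
        have h2 := (specB (specA v).choose).choose_spec
        have h3 := congrArg Φ.symm h1
        rw [RelIso.symm_apply_apply] at h3
        exact Sum.inl_injective (h2.symm.trans h3.symm)
      right_inv := by
        intro w
        have h1 := (specB w).choose_spec
        have h2 := (specA (specB w).choose).choose_spec
        have h3 := congrArg Φ h1
        rw [RelIso.apply_symm_apply] at h3
        exact Sum.inl_injective (h2.symm.trans h3.symm) }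
  refine ⟨g, ?_⟩
  intro v w
  rw [← relA_char (G := G) v w, ← relA_char (G := H) (g v) (g w)]
  show RelA _ (Sum.inl ((specA v).choose)) (Sum.inl ((specA w).choose)) ↔ _
  rw [← (specA v).choose_spec, ← (specA w).choose_spec]
  exact relA_iff Φ _ _

end recover

theorem statement18 {V W : Type*} [Fintype V] [Fintype W]
    (G : SimpleGraph V) (H : SimpleGraph W) :
    Nonempty (G ≃g H) ↔ Nonempty (qGraph2 (addK4 G) ≃g qGraph2 (addK4 H)) := by
  constructor
  · rintro ⟨e⟩
    exact ⟨qMap (addMap e)⟩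
  · rintro ⟨Φ⟩
    exact ⟨cancelK4 (recoverF Φ)⟩
end

section
/- Let Q be a graph whose vertex set is partitioned into two sets A and B such that: Q[A] is a complete multipartite graph with independent parts A_1,…,A_n; Q[B] is a complete multipartite graph with independent parts B_1,…,B_m, each of size exactly 2; the edges of Q between A and B form a perfect matching (every vertex of A has exactly one neighbour in B and every vertex of B has exactly one neighbour in A); and for each j ∈ {1,…,m}, the two vertices of B_j do not have their matched neighbours in the same part A_i. Then Q is (gem, P_1+2P_2)-free. -/
open SimpleGraph

lemma gemAux {V : Type*} (Q : SimpleGraph V) {n m : ℕ} (C : Fin n → Set V) (D : Fin m → Set V)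
    (locate : ∀ v : V, (∃ i, v ∈ C i) ∨ (∃ j, v ∈ D j))
    (sameC : ∀ {i i' : Fin n} {u v : V}, u ∈ C i → v ∈ C i' → ¬Q.Adj u v → i = i')
    (diffC : ∀ {i i' : Fin n} {u v : V}, u ∈ C i → v ∈ C i' → Q.Adj u v → i ≠ i')
    (twoD : ∀ {u v w : V} {i : Fin n} {j j' : Fin m},
      u ∈ C i → v ∈ D j → w ∈ D j' → Q.Adj u v → Q.Adj u w → v = w)
    (twoC : ∀ {u v w : V} {j : Fin m} {i i' : Fin n},
      u ∈ D j → v ∈ C i → w ∈ C i' → Q.Adj v u → Q.Adj w u → v = w)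
    (w0 w1 w2 w3 w4 : V) (i0 : Fin n) (h0 : w0 ∈ C i0)
    (d01 : w0 ≠ w1) (d04 : w0 ≠ w4)
    (d12 : w1 ≠ w2) (d13 : w1 ≠ w3) (d14 : w1 ≠ w4)
    (d23 : w2 ≠ w3) (d24 : w2 ≠ w4) (d34 : w3 ≠ w4)
    (a01 : Q.Adj w0 w1) (a02 : Q.Adj w0 w2) (a03 : Q.Adj w0 w3) (a04 : Q.Adj w0 w4)
    (a13 : Q.Adj w1 w3) (a14 : Q.Adj w1 w4) (a24 : Q.Adj w2 w4)
    (n12 : ¬Q.Adj w1 w2) (n23 : ¬Q.Adj w2 w3) (n34 : ¬Q.Adj w3 w4) : False := by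
  rcases locate w1 with ⟨i1, h1⟩ | ⟨j1, h1⟩ <;>
    rcases locate w2 with ⟨i2, h2⟩ | ⟨j2, h2⟩ <;>
      rcases locate w3 with ⟨i3, h3⟩ | ⟨j3, h3⟩ <;>
        rcases locate w4 with ⟨i4, h4⟩ | ⟨j4, h4⟩ <;>
          first
          | exact diffC h1 h3 a13
              ((sameC h2 h1 fun h => n12 h.symm).symm.trans (sameC h2 h3 n23))
          | exact d12 (twoD h0 h1 h2 a01 a02)
          | exact d13 (twoD h0 h1 h3 a01 a03)
          | exact d14 (twoD h0 h1 h4 a01 a04)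
          | exact d23 (twoD h0 h2 h3 a02 a03)
          | exact d24 (twoD h0 h2 h4 a02 a04)
          | exact d34 (twoD h0 h3 h4 a03 a04)
          | exact d04 (twoC h1 h0 h4 a01 a14.symm)
          | exact d04 (twoC h2 h0 h4 a02 a24.symm)
          | exact d01 (twoC h3 h0 h1 a03 a13)
theorem statement19 {V : Type*} [Fintype V] (Q : SimpleGraph V)
    (n m : ℕ) (A : Fin n → Set V) (B : Fin m → Set V)
    (hcover : (⋃ i, A i) ∪ (⋃ j, B j) = Set.univ)
    (hABdisj : Disjoint (⋃ i, A i) (⋃ j, B j))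
    (hAdisj : ∀ i i', i ≠ i' → Disjoint (A i) (A i'))
    (hBdisj : ∀ j j', j ≠ j' → Disjoint (B j) (B j'))
    (hAadj : ∀ i i', ∀ u ∈ A i, ∀ v ∈ A i', (Q.Adj u v ↔ i ≠ i'))
    (hBcard : ∀ j, (B j).ncard = 2)
    (hBadj : ∀ j j', ∀ u ∈ B j, ∀ v ∈ B j', (Q.Adj u v ↔ j ≠ j'))
    (hmatchA : ∀ u ∈ ⋃ i, A i, ∃! v, v ∈ (⋃ j, B j) ∧ Q.Adj u v)
    (hmatchB : ∀ v ∈ ⋃ j, B j, ∃! u, u ∈ (⋃ i, A i) ∧ Q.Adj u v)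
    (hBsplit : ∀ j i, ∀ u ∈ B j, ∀ v ∈ B j, u ≠ v →
      ∀ a ∈ A i, ∀ a' ∈ A i, Q.Adj u a → Q.Adj v a' → False) :
    _root_.Free gem Q ∧ _root_.Free P1Plus2P2 Q := by

  -- basic helpers
  have locate : ∀ v : V, (∃ i, v ∈ A i) ∨ (∃ j, v ∈ B j) := by
    intro v
    have hv : v ∈ (⋃ i, A i) ∪ (⋃ j, B j) := hcover ▸ Set.mem_univ v
    rcases hv with h | h
    · exact Or.inl (Set.mem_iUnion.mp h)
    · exact Or.inr (Set.mem_iUnion.mp h)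
  have sameA : ∀ {i i' : Fin n} {u v : V}, u ∈ A i → v ∈ A i' → ¬Q.Adj u v → i = i' := by
    intro i i' u v hu hv hn
    by_contra hne
    exact hn ((hAadj i i' u hu v hv).2 hne)
  have diffA : ∀ {i i' : Fin n} {u v : V}, u ∈ A i → v ∈ A i' → Q.Adj u v → i ≠ i' :=
    fun hu hv h => (hAadj _ _ _ hu _ hv).1 h
  have sameB : ∀ {j j' : Fin m} {u v : V}, u ∈ B j → v ∈ B j' → ¬Q.Adj u v → j = j' := by
    intro j j' u v hu hv hn
    by_contra hne
    exact hn ((hBadj j j' u hu v hv).2 hne)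
  have diffB : ∀ {j j' : Fin m} {u v : V}, u ∈ B j → v ∈ B j' → Q.Adj u v → j ≠ j' :=
    fun hu hv h => (hBadj _ _ _ hu _ hv).1 h
  have twoBnbr : ∀ {u v w : V} {i : Fin n} {j j' : Fin m},
      u ∈ A i → v ∈ B j → w ∈ B j' → Q.Adj u v → Q.Adj u w → v = w := by
    intro u v w i j j' hu hv hw h1 h2
    obtain ⟨x, -, hun⟩ := hmatchA u (Set.mem_iUnion.mpr ⟨i, hu⟩)
    have e1 := hun v ⟨Set.mem_iUnion.mpr ⟨j, hv⟩, h1⟩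
    have e2 := hun w ⟨Set.mem_iUnion.mpr ⟨j', hw⟩, h2⟩
    rw [e1, e2]
  have twoAnbr : ∀ {u v w : V} {j : Fin m} {i i' : Fin n},
      u ∈ B j → v ∈ A i → w ∈ A i' → Q.Adj u v → Q.Adj u w → v = w := by
    intro u v w j i i' hu hv hw h1 h2
    obtain ⟨x, -, hun⟩ := hmatchB u (Set.mem_iUnion.mpr ⟨j, hu⟩)
    have e1 := hun v ⟨Set.mem_iUnion.mpr ⟨i, hv⟩, h1.symm⟩
    have e2 := hun w ⟨Set.mem_iUnion.mpr ⟨i', hw⟩, h2.symm⟩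
    rw [e1, e2]
  have Btwo : ∀ {j : Fin m} {x y z : V}, x ∈ B j → y ∈ B j → z ∈ B j →
      x ≠ y → x ≠ z → y ≠ z → False := by
    intro j x y z hx hy hz hxy hxz hyz
    have h3 : ({x, y, z} : Set V).ncard = 3 :=
      Set.ncard_eq_three.mpr ⟨x, y, z, hxy, hxz, hyz, rfl⟩
    have hsub : ({x, y, z} : Set V) ⊆ B j := by
      intro t ht
      rcases ht with h | h | h <;> subst h <;> assumption
    have hle := Set.ncard_le_ncard hsub (Set.toFinite _)
    rw [h3, hBcard j] at hle
    omega
  constructor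
  · -- gem-free
    refine ⟨fun f => ?_⟩
    have inj := f.injective
    have dd : ∀ a b : Fin 5, a ≠ b → f a ≠ f b := fun a b h => inj.ne h
    have adj : ∀ a b : Fin 5, gem.Adj a b → Q.Adj (f a) (f b) := fun a b h =>
      f.map_adj_iff.mpr h
    have nadj : ∀ a b : Fin 5, ¬gem.Adj a b → ¬Q.Adj (f a) (f b) := fun a b h hq =>
      h (f.map_adj_iff.mp hq)
    have a01 := adj 0 1 (by simp [gem, P1PlusP4, SimpleGraph.fromRel_adj])
    have a02 := adj 0 2 (by simp [gem, P1PlusP4, SimpleGraph.fromRel_adj])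
    have a03 := adj 0 3 (by simp [gem, P1PlusP4, SimpleGraph.fromRel_adj])
    have a04 := adj 0 4 (by simp [gem, P1PlusP4, SimpleGraph.fromRel_adj])
    have a13 := adj 1 3 (by simp [gem, P1PlusP4, SimpleGraph.fromRel_adj])
    have a14 := adj 1 4 (by simp [gem, P1PlusP4, SimpleGraph.fromRel_adj])
    have a24 := adj 2 4 (by simp [gem, P1PlusP4, SimpleGraph.fromRel_adj])
    have n12 := nadj 1 2 (by simp [gem, P1PlusP4, SimpleGraph.fromRel_adj])
    have n23 := nadj 2 3 (by simp [gem, P1PlusP4, SimpleGraph.fromRel_adj])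
    have n34 := nadj 3 4 (by simp [gem, P1PlusP4, SimpleGraph.fromRel_adj])
    rcases locate (f 0) with ⟨i0, h0⟩ | ⟨j0, h0⟩
    · exact gemAux Q A B locate sameA diffA (fun hu hv hw h1 h2 => twoBnbr hu hv hw h1 h2)
        (fun hu hv hw h1 h2 => twoAnbr hu hv hw h1.symm h2.symm)
        (f 0) (f 1) (f 2) (f 3) (f 4) i0 h0
        (dd 0 1 (by decide)) (dd 0 4 (by decide)) (dd 1 2 (by decide)) (dd 1 3 (by decide))
        (dd 1 4 (by decide)) (dd 2 3 (by decide)) (dd 2 4 (by decide)) (dd 3 4 (by decide))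
        a01 a02 a03 a04 a13 a14 a24 n12 n23 n34
    · exact gemAux Q B A (fun v => (locate v).symm) sameB diffB
        (fun hu hv hw h1 h2 => twoAnbr hu hv hw h1 h2)
        (fun hu hv hw h1 h2 => twoBnbr hu hv hw h1.symm h2.symm)
        (f 0) (f 1) (f 2) (f 3) (f 4) j0 h0
        (dd 0 1 (by decide)) (dd 0 4 (by decide)) (dd 1 2 (by decide)) (dd 1 3 (by decide))
        (dd 1 4 (by decide)) (dd 2 3 (by decide)) (dd 2 4 (by decide)) (dd 3 4 (by decide))
        a01 a02 a03 a04 a13 a14 a24 n12 n23 n34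
  · -- (P1 + 2P2)-free
    refine ⟨fun f => ?_⟩
    have inj := f.injective
    have dd : ∀ a b : Fin 5, a ≠ b → f a ≠ f b := fun a b h => inj.ne h
    have adj : ∀ a b : Fin 5, P1Plus2P2.Adj a b → Q.Adj (f a) (f b) := fun a b h =>
      f.map_adj_iff.mpr h
    have nadj : ∀ a b : Fin 5, ¬P1Plus2P2.Adj a b → ¬Q.Adj (f a) (f b) := fun a b h hq =>
      h (f.map_adj_iff.mp hq)
    have a12 := adj 1 2 (by simp [P1Plus2P2, SimpleGraph.fromRel_adj])
    have a34 := adj 3 4 (by simp [P1Plus2P2, SimpleGraph.fromRel_adj])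
    have n01 := nadj 0 1 (by simp [P1Plus2P2, SimpleGraph.fromRel_adj])
    have n02 := nadj 0 2 (by simp [P1Plus2P2, SimpleGraph.fromRel_adj])
    have n03 := nadj 0 3 (by simp [P1Plus2P2, SimpleGraph.fromRel_adj])
    have n04 := nadj 0 4 (by simp [P1Plus2P2, SimpleGraph.fromRel_adj])
    have n13 := nadj 1 3 (by simp [P1Plus2P2, SimpleGraph.fromRel_adj])
    have n14 := nadj 1 4 (by simp [P1Plus2P2, SimpleGraph.fromRel_adj])
    have n23 := nadj 2 3 (by simp [P1Plus2P2, SimpleGraph.fromRel_adj])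
    have n24 := nadj 2 4 (by simp [P1Plus2P2, SimpleGraph.fromRel_adj])
    have d01 := dd 0 1 (by decide)
    have d02 := dd 0 2 (by decide)
    have d03 := dd 0 3 (by decide)
    have d04 := dd 0 4 (by decide)
    have d13 := dd 1 3 (by decide)
    have d14 := dd 1 4 (by decide)
    have d23 := dd 2 3 (by decide)
    have d24 := dd 2 4 (by decide)
    rcases locate (f 0) with ⟨ix, h0⟩ | ⟨jx, h0⟩
    · -- the isolated vertex lies in A
      rcases locate (f 1) with ⟨i1, h1⟩ | ⟨j1, h1⟩ <;>
        rcases locate (f 2) with ⟨i2, h2⟩ | ⟨j2, h2⟩ <;>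
          rcases locate (f 3) with ⟨i3, h3⟩ | ⟨j3, h3⟩ <;>
            rcases locate (f 4) with ⟨i4, h4⟩ | ⟨j4, h4⟩ <;>
              first
              | exact diffA h1 h2 a12 ((sameA h0 h1 n01).symm.trans (sameA h0 h2 n02))
              | exact diffA h3 h4 a34 ((sameA h0 h3 n03).symm.trans (sameA h0 h4 n04))
              | exact diffB h1 h2 a12 ((sameB h1 h3 n13).trans (sameB h2 h3 n23).symm)
              | exact diffB h1 h2 a12 ((sameB h1 h4 n14).trans (sameB h2 h4 n24).symm)
              | exact diffB h3 h4 a34 ((sameB h1 h3 n13).symm.trans (sameB h1 h4 n14))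
              | exact diffB h3 h4 a34 ((sameB h2 h3 n23).symm.trans (sameB h2 h4 n24))
              | exact hBsplit j1 ix (f 1) h1 (f 3)
                  (by rw [sameB h1 h3 n13]; exact h3) d13 (f 2)
                  (by rw [sameA h0 h2 n02]; exact h2) (f 4)
                  (by rw [sameA h0 h4 n04]; exact h4) a12 a34
              | exact hBsplit j1 ix (f 1) h1 (f 4)
                  (by rw [sameB h1 h4 n14]; exact h4) d14 (f 2)
                  (by rw [sameA h0 h2 n02]; exact h2) (f 3)
                  (by rw [sameA h0 h3 n03]; exact h3) a12 a34.symm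
              | exact hBsplit j2 ix (f 2) h2 (f 3)
                  (by rw [sameB h2 h3 n23]; exact h3) d23 (f 1)
                  (by rw [sameA h0 h1 n01]; exact h1) (f 4)
                  (by rw [sameA h0 h4 n04]; exact h4) a12.symm a34
              | exact hBsplit j2 ix (f 2) h2 (f 4)
                  (by rw [sameB h2 h4 n24]; exact h4) d24 (f 1)
                  (by rw [sameA h0 h1 n01]; exact h1) (f 3)
                  (by rw [sameA h0 h3 n03]; exact h3) a12.symm a34.symm
    · -- the isolated vertex lies in B
      rcases locate (f 1) with ⟨i1, h1⟩ | ⟨j1, h1⟩ <;>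
        rcases locate (f 2) with ⟨i2, h2⟩ | ⟨j2, h2⟩ <;>
          rcases locate (f 3) with ⟨i3, h3⟩ | ⟨j3, h3⟩ <;>
            rcases locate (f 4) with ⟨i4, h4⟩ | ⟨j4, h4⟩ <;>
              first
              | exact diffB h1 h2 a12 ((sameB h0 h1 n01).symm.trans (sameB h0 h2 n02))
              | exact diffB h3 h4 a34 ((sameB h0 h3 n03).symm.trans (sameB h0 h4 n04))
              | exact Btwo h0 (show f 1 ∈ B jx by rw [sameB h0 h1 n01]; exact h1)
                  (show f 3 ∈ B jx by rw [sameB h0 h3 n03]; exact h3) d01 d03 d13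
              | exact Btwo h0 (show f 1 ∈ B jx by rw [sameB h0 h1 n01]; exact h1)
                  (show f 4 ∈ B jx by rw [sameB h0 h4 n04]; exact h4) d01 d04 d14
              | exact Btwo h0 (show f 2 ∈ B jx by rw [sameB h0 h2 n02]; exact h2)
                  (show f 3 ∈ B jx by rw [sameB h0 h3 n03]; exact h3) d02 d03 d23
              | exact Btwo h0 (show f 2 ∈ B jx by rw [sameB h0 h2 n02]; exact h2)
                  (show f 4 ∈ B jx by rw [sameB h0 h4 n04]; exact h4) d02 d04 d24
              | exact diffA h3 h4 a34 ((sameA h1 h3 n13).symm.trans (sameA h1 h4 n14))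
              | exact diffA h3 h4 a34 ((sameA h2 h3 n23).symm.trans (sameA h2 h4 n24))
              | exact diffA h1 h2 a12 ((sameA h1 h3 n13).trans (sameA h2 h3 n23).symm)
              | exact diffA h1 h2 a12 ((sameA h1 h4 n14).trans (sameA h2 h4 n24).symm)
end
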